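/- Fix q ≥ 2 and let x = (u, α_{t₁}(a₁b₁), (a,b)^s, α_{t₂}(a₂b₂), w) and y = (u, α_{t₁}(b₁a₁), (a,b)^s, α_{t₂}(b₂a₂), w) as in Case (A) with t₁, t₂ even, |u| = u₀, middle block v of length v₀. If t₁(a₁−b₁) = t₂(b₂−a₂), then VT^{(2)}(x) − VT^{(2)}(y) = (t₁/2)·(a₁−b₁)·(t₁ + 2v₀ + t₂). -/
import Mathlib


/-- The alternating sequence `α_t(ab)` of length `t` starting with `a`. -/
def alt (q : ℕ) (a b : Fin q) : ℕ → List (Fin q)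
  | 0 => []
  | t + 1 => a :: alt q b a t

/-- `VT^{(k)}(l) = Σ_{i=1}^{|l|} i^k l[i]` over the integers. -/
def vtk (q k : ℕ) [NeZero q] (l : List (Fin q)) : ℤ :=
  ∑ i ∈ Finset.range l.length, ((i : ℤ) + 1) ^ k * (((l.getD i 0 : Fin q) : ℕ) : ℤ)

def Saux (q : ℕ) [NeZero q] (c : ℤ) (l : List (Fin q)) : ℤ :=
  ∑ i ∈ Finset.range l.length, ((i : ℤ) + c + 1) ^ 2 * (((l.getD i 0 : Fin q) : ℕ) : ℤ)

variable {q : ℕ} [NeZero q]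

lemma Saux_nil (c : ℤ) : Saux q c ([] : List (Fin q)) = 0 := by simp [Saux]

lemma Saux_cons (c : ℤ) (a : Fin q) (l : List (Fin q)) :
    Saux q c (a :: l) = (c + 1) ^ 2 * ((a : ℕ) : ℤ) + Saux q (c + 1) l := by
  simp only [Saux, List.length_cons, Finset.sum_range_succ']
  simp only [List.getD_cons_succ, List.getD_cons_zero]
  rw [add_comm]
  congr 1
  · push_cast; ring
  · apply Finset.sum_congr rfl; intro i _; push_cast; ring

lemma Saux_append (c : ℤ) (l1 l2 : List (Fin q)) :
    Saux q c (l1 ++ l2) = Saux q c l1 + Saux q (c + l1.length) l2 := by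
  induction l1 generalizing c with
  | nil => simp [Saux_nil]
  | cons a l ih =>
      simp only [List.cons_append, Saux_cons, ih, List.length_cons]
      push_cast; ring

lemma vtk_eq (l : List (Fin q)) : vtk q 2 l = Saux q 0 l := by
  unfold vtk Saux
  apply Finset.sum_congr rfl
  intro i _; ring_nf

lemma alt_length : ∀ (t : ℕ) (a b : Fin q), (alt q a b t).length = t
  | 0, _, _ => rfl
  | t + 1, a, b => by simp [alt, alt_length t]

lemma alt_two (a b : Fin q) (t : ℕ) :
    alt q a b (t + 2) = a :: b :: alt q a b t := rfl

lemma altD (a b : Fin q) : ∀ (m : ℕ) (c : ℤ),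
    Saux q c (alt q a b (2 * m)) - Saux q c (alt q b a (2 * m)) =
      (((b : ℕ) : ℤ) - ((a : ℕ) : ℤ)) * m * (2 * c + 2 * m + 1)
  | 0, c => by simp [alt, Saux_nil]
  | m + 1, c => by
      have h2 : 2 * (m + 1) = 2 * m + 2 := by ring
      rw [h2, alt_two, alt_two, Saux_cons, Saux_cons, Saux_cons, Saux_cons]
      have ih := altD a b m (c + 1 + 1)
      push_cast
      push_cast at ih
      linear_combination ih

theorem stmt16 (q : ℕ) [NeZero q] (u v w : List (Fin q)) (a₁ b₁ a₂ b₂ : Fin q)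
    (h1 : a₁ ≠ b₁) (h2 : a₂ ≠ b₂) (t₁ t₂ : ℕ) (ht₁ : 0 < t₁) (ht₂ : 0 < t₂)
    (he₁ : Even t₁) (he₂ : Even t₂)
    (x y : List (Fin q))
    (hx : x = u ++ alt q a₁ b₁ t₁ ++ v ++ alt q a₂ b₂ t₂ ++ w)
    (hy : y = u ++ alt q b₁ a₁ t₁ ++ v ++ alt q b₂ a₂ t₂ ++ w)
    (hyp : (t₁ : ℤ) * (((a₁ : ℕ) : ℤ) - ((b₁ : ℕ) : ℤ)) =
      (t₂ : ℤ) * (((b₂ : ℕ) : ℤ) - ((a₂ : ℕ) : ℤ))) :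
    vtk q 2 x - vtk q 2 y =
      ((t₁ : ℤ) / 2) * (((a₁ : ℕ) : ℤ) - ((b₁ : ℕ) : ℤ)) *
        ((t₁ : ℤ) + 2 * (v.length : ℤ) + (t₂ : ℤ)) := by
  obtain ⟨m₁, hm₁⟩ := he₁
  obtain ⟨m₂, hm₂⟩ := he₂
  have ht1 : t₁ = 2 * m₁ := by omega
  have ht2 : t₂ = 2 * m₂ := by omega
  subst hx hy ht1 ht2
  have hdiv : ((2 * m₁ : ℕ) : ℤ) / 2 = (m₁ : ℤ) := by push_cast; omega
  rw [vtk_eq, vtk_eq]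
  simp only [Saux_append, List.length_append, alt_length, zero_add]
  have D1 := altD a₁ b₁ m₁ ((u.length : ℕ) : ℤ)
  have D2 := altD a₂ b₂ m₂ (((u.length : ℤ) + (2 * m₁ : ℕ)) + (v.length : ℕ))
  rw [hdiv]
  push_cast at D1 D2 ⊢
  have hyp' : (m₁ : ℤ) * (((a₁ : ℕ) : ℤ) - ((b₁ : ℕ) : ℤ)) =
      (m₂ : ℤ) * (((b₂ : ℕ) : ℤ) - ((a₂ : ℕ) : ℤ)) := by
    push_cast at hyp; linarith
  linear_combination D1 + D2 - (2 * (u.length : ℤ) + 4 * (m₁:ℤ) + 2 * (v.length:ℤ) + 2*(m₂:ℤ) + 1) * hyp'
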